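/- arXiv:1112.4109 — 6 statements merged into one kernel-verified Lean document; each statement's English description precedes it below -/
import Mathlib

section
/- Let x ∈ Lasserre_r(V), let N ⊆ V with |N| ≤ r, and let u, v ∈ V. Then Σ over labelings f : N → {0,1} with x_N(f) ≠ 0 of ‖x_N(f)‖² · μ({τ ∈ [0,1] : exactly one of the two inequalities ⟨x_N(f), x_u⟩/‖x_N(f)‖² ≥ τ and ⟨x_N(f), x_v⟩/‖x_N(f)‖² ≥ τ holds}) equals Σ over all labelings f : N → {0,1} of |⟨x_N(f), x_u − x_v⟩|, where μ denotes Lebesgue measure on [0,1]. (This is the probability that the randomized threshold rounding separates u and v.) -/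
open scoped RealInnerProductSpace

/-- Extend a labeling of the subset `N` to all of `V` by assigning `false` outside `N`. -/
def extendLab {V : Type*} [DecidableEq V] (N : Finset V) (g : {a // a ∈ N} → Bool) :
    V → Bool :=
  fun v => if h : v ∈ N then g ⟨v, h⟩ else false

/-- `x` satisfies `r` rounds of the Lasserre hierarchy (for 0/1 labelings of `V`),
with vectors in `ℝ^d`.  A collection is encoded as a function on all finite subsets `S`
and all full labelings `f : V → Bool`, where `x S f` may depend only on the restriction
of `f` to `S`. -/
structure IsLasserre (V : Type*) [Fintype V] [DecidableEq V] (r d : ℕ)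
    (x : Finset V → (V → Bool) → EuclideanSpace ℝ (Fin d)) : Prop where
  /-- `x S f` depends only on the labels of the vertices in `S`. -/
  localDep : ∀ S : Finset V, ∀ f g : V → Bool, (∀ u ∈ S, f u = g u) → x S f = x S g
  /-- (a) `x_∅ ≠ 0`. -/
  nonzero : x ∅ (fun _ => false) ≠ 0
  /-- (b) orthogonality of inconsistent labelings. -/
  ortho : ∀ S T : Finset V, S.card ≤ r + 1 → T.card ≤ r + 1 →
    ∀ f g : V → Bool, (∃ u ∈ S ∩ T, f u ≠ g u) → ⟪x S f, x T g⟫ = 0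
  /-- (c) consistency: the inner product depends only on `S ∪ T` and the combined labeling. -/
  consistent : ∀ S T A B : Finset V, S.card ≤ r + 1 → T.card ≤ r + 1 →
    A.card ≤ r + 1 → B.card ≤ r + 1 → S ∪ T = A ∪ B →
    ∀ h : V → Bool, ⟪x S h, x T h⟫ = ⟪x A h, x B h⟫
  /-- (d) for each vertex the label probabilities sum to `‖x_∅‖²`. -/
  unitTotal : ∀ u : V,
    ‖x {u} (fun _ => false)‖ ^ 2 + ‖x {u} (fun _ => true)‖ ^ 2
      = ‖x ∅ (fun _ => false)‖ ^ 2
  /-- (e) marginalization over the label of one vertex. -/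
  marginal : ∀ S : Finset V, S.card ≤ r + 1 → ∀ u ∈ S, ∀ f : V → Bool,
    x S (Function.update f u false) + x S (Function.update f u true) = x (S.erase u) f

/-- The vector `x_u = x_{{u}}(1)` associated with a single vertex. -/
def xVec {V : Type*} [Fintype V] [DecidableEq V] {d : ℕ}
    (x : Finset V → (V → Bool) → EuclideanSpace ℝ (Fin d)) (u : V) :
    EuclideanSpace ℝ (Fin d) :=
  x {u} (fun _ => true)


lemma key {V : Type*} [Fintype V] [DecidableEq V] {r d : ℕ}
    {x : Finset V → (V → Bool) → EuclideanSpace ℝ (Fin d)}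
    (hx : IsLasserre V r d x) {N : Finset V} (hN : N.card ≤ r)
    (f : V → Bool) (u : V) :
    0 ≤ ⟪x N f, xVec x u⟫ ∧ ⟪x N f, xVec x u⟫ ≤ ‖x N f‖ ^ 2 := by
  have hN' : N.card ≤ r + 1 := le_trans hN (Nat.le_succ r)
  have h1 : ({u} : Finset V).card ≤ r + 1 := by simp
  by_cases hu : u ∈ N
  · cases hfu : f u with
    | false =>
      have h0 : ⟪x N f, xVec x u⟫ = 0 := by
        apply hx.ortho N {u} hN' h1 f (fun _ => true)
        exact ⟨u, by simp [hu], by simp [hfu]⟩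
      constructor
      · rw [h0]
      · rw [h0]; positivity
    | true =>
      have heq : x {u} f = x {u} (fun _ => true) := by
        apply hx.localDep
        intro a ha
        simp only [Finset.mem_singleton] at ha
        simp [ha, hfu]
      have hc : ⟪x N f, x {u} f⟫ = ⟪x N f, x N f⟫ := by
        apply hx.consistent N {u} N N hN' h1 hN' hN'
        rw [Finset.union_self, Finset.union_eq_left]
        simpa using hu
      have : ⟪x N f, xVec x u⟫ = ‖x N f‖ ^ 2 := by
        rw [xVec, ← heq, hc, real_inner_self_eq_norm_sq]
      rw [this]
      exact ⟨by positivity, le_refl _⟩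
  · set T := insert u N with hT
    have hTc : T.card ≤ r + 1 :=
      le_trans (Finset.card_insert_le u N) (by omega)
    set f0 := Function.update f u false with hf0
    set f1 := Function.update f u true with hf1
    have hmarg : x T f0 + x T f1 = x N f := by
      have := hx.marginal T hTc u (Finset.mem_insert_self u N) f
      rwa [hT, Finset.erase_insert hu] at this
    have hxu1 : xVec x u = x {u} f1 := by
      rw [xVec]
      apply hx.localDep
      intro a ha
      simp only [Finset.mem_singleton] at ha
      simp [ha, hf1]
    -- ⟪x T f0, x {u} f1⟫ = 0
    have ho1 : ⟪x T f0, x {u} f1⟫ = 0 := by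
      apply hx.ortho T {u} hTc h1
      exact ⟨u, by simp [hT], by simp [hf0, hf1]⟩
    have ho0 : ⟪x T f1, x {u} f0⟫ = 0 := by
      apply hx.ortho T {u} hTc h1
      exact ⟨u, by simp [hT], by simp [hf0, hf1]⟩
    have hcons1 : ⟪x T f1, x {u} f1⟫ = ⟪x T f1, x T f1⟫ := by
      apply hx.consistent T {u} T T hTc h1 hTc hTc
      rw [Finset.union_self, Finset.union_eq_left]
      simp [hT]
    have hcons0 : ⟪x T f0, x {u} f0⟫ = ⟪x T f0, x T f0⟫ := by
      apply hx.consistent T {u} T T hTc h1 hTc hTc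
      rw [Finset.union_self, Finset.union_eq_left]
      simp [hT]
    have hu1 : ⟪x N f, xVec x u⟫ = ‖x T f1‖ ^ 2 := by
      rw [hxu1, ← hmarg, inner_add_left, ho1, hcons1,
        real_inner_self_eq_norm_sq]
      ring
    have hu0 : ⟪x N f, x {u} f0⟫ = ‖x T f0‖ ^ 2 := by
      rw [← hmarg, inner_add_left, ho0, hcons0, real_inner_self_eq_norm_sq]
      ring
    -- marginal over {u}
    have hmargu : x {u} f0 + x {u} f1 = x ∅ f := by
      have := hx.marginal {u} h1 u (Finset.mem_singleton_self u) f
      rwa [Finset.erase_singleton] at this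
    have hempty : ⟪x N f, x ∅ f⟫ = ‖x N f‖ ^ 2 := by
      rw [← real_inner_self_eq_norm_sq]
      apply hx.consistent N ∅ N N hN' (by simp) hN' hN'
      simp
    have hsum : ‖x N f‖ ^ 2 = ‖x T f0‖ ^ 2 + ‖x T f1‖ ^ 2 := by
      rw [← hempty, ← hmargu, inner_add_right, hu0, ← hxu1, hu1]
    constructor
    · rw [hu1]; positivity
    · rw [hu1, hsum]
      nlinarith [sq_nonneg ‖x T f0‖]

lemma xorSet (α β : ℝ) (hα0 : 0 ≤ α) (hα1 : α ≤ 1) (hβ0 : 0 ≤ β) (hβ1 : β ≤ 1) :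
    {τ : ℝ | τ ∈ Set.Icc (0 : ℝ) 1 ∧ Xor' (τ ≤ α) (τ ≤ β)}
      = Set.Ioc (min α β) (max α β) := by
  ext τ
  simp only [Set.mem_setOf_eq, Set.mem_Icc, Set.mem_Ioc, Xor', lt_min_iff,
    min_lt_iff, le_max_iff, max_le_iff]
  constructor
  · rintro ⟨⟨h0, h1⟩, (⟨ha, hb⟩ | ⟨hb, ha⟩)⟩
    · exact ⟨Or.inr (not_le.mp hb), Or.inl ha⟩
    · exact ⟨Or.inl (not_le.mp ha), Or.inr hb⟩
  · rintro ⟨hmin, hmax⟩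
    rcases le_total α β with hab | hab
    · refine ⟨⟨?_, ?_⟩, ?_⟩
      · rcases hmin with h | h <;> linarith
      · rcases hmax with h | h <;> linarith
      · rcases hmin with h | h
        · right
          constructor
          · rcases hmax with h' | h' <;> linarith
          · linarith
        · right
          constructor
          · rcases hmax with h' | h' <;> linarith
          · linarith
    · refine ⟨⟨?_, ?_⟩, ?_⟩
      · rcases hmin with h | h <;> linarith
      · rcases hmax with h | h <;> linarith
      · left
        constructor
        · rcases hmax with h' | h' <;> linarith
        · rcases hmin with h | h <;> linarith

open scoped Classical in
/-- The separation probability of the randomized threshold rounding: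
summing, over labelings `f : N → {0,1}` with `x_N(f) ≠ 0`, the quantity
`‖x_N(f)‖²` times the Lebesgue measure of the set of thresholds `τ ∈ [0,1]` for which
exactly one of `⟨x_N(f), x_u⟩/‖x_N(f)‖² ≥ τ` and `⟨x_N(f), x_v⟩/‖x_N(f)‖² ≥ τ` holds,
equals `Σ_f |⟨x_N(f), x_u − x_v⟩|`. -/
theorem stmt3 {V : Type*} [Fintype V] [DecidableEq V] (r d : ℕ)
    (x : Finset V → (V → Bool) → EuclideanSpace ℝ (Fin d))
    (hx : IsLasserre V r d x)
    (N : Finset V) (hN : N.card ≤ r) (u v : V) :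
    ∑ g ∈ Finset.univ.filter
        (fun g : {a // a ∈ N} → Bool => x N (extendLab N g) ≠ 0),
      ‖x N (extendLab N g)‖ ^ 2 *
        (MeasureTheory.volume {τ : ℝ | τ ∈ Set.Icc (0 : ℝ) 1 ∧
          Xor' (τ ≤ ⟪x N (extendLab N g), xVec x u⟫ / ‖x N (extendLab N g)‖ ^ 2)
               (τ ≤ ⟪x N (extendLab N g), xVec x v⟫ / ‖x N (extendLab N g)‖ ^ 2)}).toReal
      = ∑ g : {a // a ∈ N} → Bool,
          |⟪x N (extendLab N g), xVec x u - xVec x v⟫| := by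
  have hrhs : ∑ g : {a // a ∈ N} → Bool,
      |⟪x N (extendLab N g), xVec x u - xVec x v⟫|
      = ∑ g ∈ Finset.univ.filter
          (fun g : {a // a ∈ N} → Bool => x N (extendLab N g) ≠ 0),
        |⟪x N (extendLab N g), xVec x u - xVec x v⟫| := by
    refine (Finset.sum_filter_of_ne ?_).symm
    intro g _ hne h0
    rw [h0] at hne
    simp at hne
  rw [hrhs]
  apply Finset.sum_congr rfl
  intro g hg
  have h0 : x N (extendLab N g) ≠ 0 := (Finset.mem_filter.mp hg).2
  set f := extendLab N g with hf
  set c := ‖x N f‖ ^ 2 with hcdef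
  have hc : 0 < c := by
    have := norm_pos_iff.mpr h0
    positivity
  set a := ⟪x N f, xVec x u⟫ with hadef
  set b := ⟪x N f, xVec x v⟫ with hbdef
  obtain ⟨ha0, ha1⟩ := key hx hN f u
  obtain ⟨hb0, hb1⟩ := key hx hN f v
  have hα0 : 0 ≤ a / c := div_nonneg ha0 hc.le
  have hα1 : a / c ≤ 1 := (div_le_one hc).mpr ha1
  have hβ0 : 0 ≤ b / c := div_nonneg hb0 hc.le
  have hβ1 : b / c ≤ 1 := (div_le_one hc).mpr hb1
  rw [xorSet _ _ hα0 hα1 hβ0 hβ1, Real.volume_Ioc,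
    ENNReal.toReal_ofReal (by simp [min_le_max])]
  rw [max_sub_min_eq_abs, div_sub_div_same, abs_div, abs_of_pos hc,
    inner_sub_right]
  rw [← hadef, ← hbdef]
  field_simp
  exact abs_sub_comm _ _
end

section
/- Threshold rounding of an ℓ1 embedding: let V be a finite set, Υ a finite index set, y : V → ℝ^Υ a collection of vectors, and C, D edge weights on V with Σ_{u<v} D_{u,v}‖y_u − y_v‖₁ > 0. Then there exist a coordinate f ∈ Υ and a threshold τ ∈ ℝ such that the threshold cut T = {u ∈ V : y_u(f) ≥ τ} satisfies D(T) > 0 and Φ_T ≤ (Σ_{u<v} C_{u,v}‖y_u − y_v‖₁) / (Σ_{u<v} D_{u,v}‖y_u − y_v‖₁). -/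
/-- Weight of edges crossing the cut `(T, V∖T)`:
`Σ_{u<v} W_{u,v} |1_T(u) − 1_T(v)|`, computed as half of the symmetric double sum. -/
noncomputable def cutVal {V : Type*} [Fintype V] [DecidableEq V]
    (W : V → V → ℝ) (T : Finset V) : ℝ :=
  (∑ u : V, ∑ v : V, W u v *
    |(if u ∈ T then (1 : ℝ) else 0) - (if v ∈ T then (1 : ℝ) else 0)|) / 2

/-- The weighted sum `Σ_{u<v} W_{u,v} ‖y_u − y_v‖₁` of `ℓ₁`-distances,
computed as half of the symmetric double sum. -/
noncomputable def l1Sum {V Υ : Type*} [Fintype V] [Fintype Υ]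
    (W : V → V → ℝ) (y : V → Υ → ℝ) : ℝ :=
  (∑ u : V, ∑ v : V, W u v * ∑ f : Υ, |y u f - y v f|) / 2

noncomputable def gapOf (S : Finset ℝ) (τ : ℝ) : ℝ :=
  if h : (S.filter (fun x => x < τ)).Nonempty then τ - (S.filter (fun x => x < τ)).max' h else 0

lemma gapOf_nonneg (S : Finset ℝ) (τ : ℝ) : 0 ≤ gapOf S τ := by
  unfold gapOf
  split_ifs with h
  · have hm := Finset.max'_mem _ h
    have hlt : (S.filter (fun x => x < τ)).max' h < τ := (Finset.mem_filter.1 hm).2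
    linarith
  · exact le_refl 0

lemma tele (S : Finset ℝ) : ∀ (n : ℕ) (a b : ℝ), a ∈ S → b ∈ S → a ≤ b →
    (S.filter fun τ => a < τ ∧ τ ≤ b).card = n →
    ∑ τ ∈ S.filter (fun τ => a < τ ∧ τ ≤ b), gapOf S τ = b - a := by
  intro n
  induction n with
  | zero =>
    intro a b ha hb hab hcard
    have hempty : (S.filter fun τ => a < τ ∧ τ ≤ b) = ∅ := Finset.card_eq_zero.1 hcard
    have hab' : a = b := by
      by_contra h
      have hlt : a < b := lt_of_le_of_ne hab h
      have hmem : b ∈ (S.filter fun τ => a < τ ∧ τ ≤ b) :=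
        Finset.mem_filter.2 ⟨hb, hlt, le_refl b⟩
      rw [hempty] at hmem
      exact absurd hmem (Finset.notMem_empty b)
    rw [hempty]
    simp [hab']
  | succ m ih =>
    intro a b ha hb hab hcard
    rcases eq_or_lt_of_le hab with rfl | hlt
    · exfalso
      have hempty : (S.filter fun τ => a < τ ∧ τ ≤ a) = ∅ := by
        apply Finset.filter_false_of_mem
        rintro x _ ⟨h1, h2⟩
        exact absurd (lt_of_lt_of_le h1 h2) (lt_irrefl a)
      rw [hempty] at hcard
      simp at hcard
    · have hbmem : b ∈ (S.filter fun τ => a < τ ∧ τ ≤ b) :=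
        Finset.mem_filter.2 ⟨hb, hlt, le_refl b⟩
      have hSbne : (S.filter (fun x => x < b)).Nonempty :=
        ⟨a, by exact Finset.mem_filter.2 ⟨ha, hlt⟩⟩
      set a' := (S.filter (fun x => x < b)).max' hSbne with ha'def
      have ha'mem : a' ∈ S.filter (fun x => x < b) := Finset.max'_mem _ hSbne
      have ha'S : a' ∈ S := (Finset.mem_filter.1 ha'mem).1
      have ha'lt : a' < b := (Finset.mem_filter.1 ha'mem).2
      have haa' : a ≤ a' := Finset.le_max' _ a (by exact Finset.mem_filter.2 ⟨ha, hlt⟩)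
      have hgapb : gapOf S b = b - a' := by
        unfold gapOf
        rw [dif_pos hSbne]
      have hfilter_eq : (S.filter fun τ => a < τ ∧ τ ≤ a')
          = (S.filter fun τ => a < τ ∧ τ ≤ b).erase b := by
        ext τ
        simp only [Finset.mem_filter, Finset.mem_erase]
        constructor
        · rintro ⟨hτS, h1, h2⟩
          exact ⟨ne_of_lt (lt_of_le_of_lt h2 ha'lt), hτS, h1, le_of_lt (lt_of_le_of_lt h2 ha'lt)⟩
        · rintro ⟨hne, hτS, h1, h2⟩
          have hτb : τ < b := lt_of_le_of_ne h2 hne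
          exact ⟨hτS, h1, Finset.le_max' _ τ (by exact Finset.mem_filter.2 ⟨hτS, hτb⟩)⟩
      have hcard' : ((S.filter fun τ => a < τ ∧ τ ≤ a')).card = m := by
        rw [hfilter_eq, Finset.card_erase_of_mem hbmem, hcard]
        rfl
      have hIH := ih a a' ha ha'S haa' hcard'
      have hsum := Finset.add_sum_erase _ (gapOf S) hbmem
      rw [← hsum, ← hfilter_eq, hIH, hgapb]
      ring

lemma key_identity (S : Finset ℝ) (a b : ℝ) (ha : a ∈ S) (hb : b ∈ S) :
    ∑ τ ∈ S, gapOf S τ * |(if τ ≤ a then (1:ℝ) else 0) - (if τ ≤ b then 1 else 0)| = |a - b| := by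
  wlog hab : a ≤ b with H
  · have hba : b ≤ a := le_of_not_ge hab
    have h2 := H S b a hb ha hba
    rw [abs_sub_comm a b, ← h2]
    apply Finset.sum_congr rfl
    intro τ _
    rw [abs_sub_comm]
  · have habs : |a - b| = b - a := by rw [abs_sub_comm]; exact abs_of_nonneg (by linarith)
    rw [habs]
    have hterm : ∀ τ ∈ S, gapOf S τ * |(if τ ≤ a then (1:ℝ) else 0) - (if τ ≤ b then 1 else 0)|
        = if a < τ ∧ τ ≤ b then gapOf S τ else 0 := by
      intro τ _
      by_cases h1 : τ ≤ a
      · have h2 : τ ≤ b := le_trans h1 hab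
        rw [if_pos h1, if_pos h2, if_neg (by rintro ⟨hh, _⟩; exact absurd h1 (not_le.2 hh))]
        simp
      · by_cases h2 : τ ≤ b
        · rw [if_neg h1, if_pos h2, if_pos ⟨not_le.1 h1, h2⟩]
          simp
        · rw [if_neg h1, if_neg h2, if_neg (by rintro ⟨_, hh⟩; exact h2 hh)]
          simp
    rw [Finset.sum_congr rfl hterm, ← Finset.sum_filter]
    exact tele S _ a b ha hb hab rfl

lemma cutVal_nonneg {V : Type*} [Fintype V] [DecidableEq V]
    (W : V → V → ℝ) (hW : ∀ u v, 0 ≤ W u v) (T : Finset V) : 0 ≤ cutVal W T := by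
  unfold cutVal
  apply div_nonneg _ (by norm_num)
  apply Finset.sum_nonneg; intro u _
  apply Finset.sum_nonneg; intro v _
  exact mul_nonneg (hW u v) (abs_nonneg _)

lemma decomp {V Υ : Type*} [Fintype V] [DecidableEq V] [Fintype Υ]
    (W : V → V → ℝ) (y : V → Υ → ℝ)
    (S : Finset ℝ) (hS : ∀ u f, y u f ∈ S) :
    l1Sum W y = ∑ f : Υ, ∑ τ ∈ S, gapOf S τ *
      cutVal W (Finset.univ.filter fun u => τ ≤ y u f) := by
  unfold l1Sum cutVal
  have main : (∑ u : V, ∑ v : V, W u v * ∑ f : Υ, |y u f - y v f|)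
      = ∑ f : Υ, ∑ τ ∈ S, ∑ u : V, ∑ v : V,
          W u v * (gapOf S τ * |(if τ ≤ y u f then (1:ℝ) else 0) - (if τ ≤ y v f then 1 else 0)|) := by
    have h1 : (∑ u : V, ∑ v : V, W u v * ∑ f : Υ, |y u f - y v f|)
        = ∑ u : V, ∑ v : V, ∑ f : Υ, ∑ τ ∈ S,
            W u v * (gapOf S τ * |(if τ ≤ y u f then (1:ℝ) else 0) - (if τ ≤ y v f then 1 else 0)|) := by
      apply Finset.sum_congr rfl; intro u _
      apply Finset.sum_congr rfl; intro v _
      rw [Finset.mul_sum]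
      apply Finset.sum_congr rfl; intro f _
      rw [← key_identity S (y u f) (y v f) (hS u f) (hS v f), Finset.mul_sum]
    rw [h1]
    have h2 : (∑ u : V, ∑ v : V, ∑ f : Υ, ∑ τ ∈ S,
            W u v * (gapOf S τ * |(if τ ≤ y u f then (1:ℝ) else 0) - (if τ ≤ y v f then 1 else 0)|))
        = ∑ u : V, ∑ f : Υ, ∑ v : V, ∑ τ ∈ S,
            W u v * (gapOf S τ * |(if τ ≤ y u f then (1:ℝ) else 0) - (if τ ≤ y v f then 1 else 0)|) :=
      Finset.sum_congr rfl (fun u _ => Finset.sum_comm)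
    rw [h2, Finset.sum_comm]
    apply Finset.sum_congr rfl; intro f _
    have h3 : (∑ u : V, ∑ v : V, ∑ τ ∈ S,
            W u v * (gapOf S τ * |(if τ ≤ y u f then (1:ℝ) else 0) - (if τ ≤ y v f then 1 else 0)|))
        = ∑ u : V, ∑ τ ∈ S, ∑ v : V,
            W u v * (gapOf S τ * |(if τ ≤ y u f then (1:ℝ) else 0) - (if τ ≤ y v f then 1 else 0)|) :=
      Finset.sum_congr rfl (fun u _ => Finset.sum_comm)
    rw [h3, Finset.sum_comm]
  rw [main, Finset.sum_div]
  apply Finset.sum_congr rfl; intro f _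
  rw [Finset.sum_div]
  apply Finset.sum_congr rfl; intro τ _
  rw [mul_div_assoc']
  congr 1
  rw [Finset.mul_sum]
  apply Finset.sum_congr rfl; intro u _
  rw [Finset.mul_sum]
  apply Finset.sum_congr rfl; intro v _
  simp only [Finset.mem_filter, Finset.mem_univ, true_and]
  ring

lemma averaging {ι : Type*} (K : Finset ι) (lam c d : ι → ℝ)
    (hlam : ∀ k ∈ K, 0 ≤ lam k) (hc : ∀ k ∈ K, 0 ≤ c k) (hd : ∀ k ∈ K, 0 ≤ d k)
    (hpos : 0 < ∑ k ∈ K, lam k * d k) :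
    ∃ k ∈ K, 0 < d k ∧
      c k * (∑ k ∈ K, lam k * d k) ≤ (∑ k ∈ K, lam k * c k) * d k := by
  by_contra hcon
  push_neg at hcon
  set SC := ∑ k ∈ K, lam k * c k with hSC
  set SD := ∑ k ∈ K, lam k * d k with hSD
  obtain ⟨k0, hk0K, hk0⟩ : ∃ k ∈ K, (0:ℝ) < lam k * d k := by
    by_contra hall
    push_neg at hall
    have : SD ≤ 0 := Finset.sum_nonpos hall
    linarith
  have hlam0 : 0 < lam k0 := by
    rcases lt_or_ge 0 (lam k0) with h | h
    · exact h
    · exfalso; nlinarith [hd k0 hk0K]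
  have hd0 : 0 < d k0 := by
    rcases lt_or_ge 0 (d k0) with h | h
    · exact h
    · exfalso; nlinarith [hlam k0 hk0K]
  have hle : ∀ k ∈ K, lam k * (SC * d k) ≤ lam k * (c k * SD) := by
    intro k hk
    rcases lt_or_ge 0 (d k) with h | h
    · exact mul_le_mul_of_nonneg_left (le_of_lt (hcon k hk h)) (hlam k hk)
    · have hdk : d k = 0 := le_antisymm h (hd k hk)
      rw [hdk]
      have : 0 ≤ lam k * (c k * SD) :=
        mul_nonneg (hlam k hk) (mul_nonneg (hc k hk) (le_of_lt hpos))
      simpa using this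
  have hstrict : lam k0 * (SC * d k0) < lam k0 * (c k0 * SD) :=
    mul_lt_mul_of_pos_left (hcon k0 hk0K hd0) hlam0
  have hsum : ∑ k ∈ K, lam k * (SC * d k) < ∑ k ∈ K, lam k * (c k * SD) :=
    Finset.sum_lt_sum hle ⟨k0, hk0K, hstrict⟩
  have hL : ∑ k ∈ K, lam k * (SC * d k) = SC * SD := by
    rw [hSD, Finset.mul_sum]
    apply Finset.sum_congr rfl; intro k _; ring
  have hR : ∑ k ∈ K, lam k * (c k * SD) = SC * SD := by
    rw [hSC, Finset.sum_mul]
    apply Finset.sum_congr rfl; intro k _; ring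
  rw [hL, hR] at hsum
  exact lt_irrefl _ hsum

/-- Threshold rounding of an `ℓ₁`-embedding: if
`Σ_{u<v} D_{u,v}‖y_u − y_v‖₁ > 0`, then some coordinate `f` and threshold `τ` give a
threshold cut `T = {u : y_u(f) ≥ τ}` with `D(T) > 0` whose sparsity is at most
`(Σ_{u<v} C_{u,v}‖y_u − y_v‖₁) / (Σ_{u<v} D_{u,v}‖y_u − y_v‖₁)`. -/
theorem stmt4 {V Υ : Type*} [Fintype V] [DecidableEq V] [Fintype Υ]
    (C D : V → V → ℝ)
    (hCsymm : ∀ u v, C u v = C v u) (hCnonneg : ∀ u v, 0 ≤ C u v)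
    (hDsymm : ∀ u v, D u v = D v u) (hDnonneg : ∀ u v, 0 ≤ D u v)
    (y : V → Υ → ℝ)
    (hpos : 0 < l1Sum D y) :
    ∃ (f : Υ) (τ : ℝ),
      0 < cutVal D (Finset.univ.filter fun u => τ ≤ y u f) ∧
      cutVal C (Finset.univ.filter fun u => τ ≤ y u f) /
          cutVal D (Finset.univ.filter fun u => τ ≤ y u f)
        ≤ l1Sum C y / l1Sum D y := by
  classical
  set S : Finset ℝ := Finset.image (fun p : V × Υ => y p.1 p.2) Finset.univ with hSdef
  have hS : ∀ u f, y u f ∈ S := by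
    intro u f
    exact Finset.mem_image.2 ⟨(u, f), Finset.mem_univ _, rfl⟩
  set K : Finset (Υ × ℝ) := Finset.univ ×ˢ S with hKdef
  set lam : Υ × ℝ → ℝ := fun k => gapOf S k.2 with hlamdef
  set c : Υ × ℝ → ℝ := fun k => cutVal C (Finset.univ.filter fun u => k.2 ≤ y u k.1) with hcdef
  set d : Υ × ℝ → ℝ := fun k => cutVal D (Finset.univ.filter fun u => k.2 ≤ y u k.1) with hddef
  have hdecompC : l1Sum C y = ∑ k ∈ K, lam k * c k := by
    rw [decomp C y S hS, hKdef, Finset.sum_product]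
  have hdecompD : l1Sum D y = ∑ k ∈ K, lam k * d k := by
    rw [decomp D y S hS, hKdef, Finset.sum_product]
  have hpos' : 0 < ∑ k ∈ K, lam k * d k := hdecompD ▸ hpos
  obtain ⟨k, hkK, hdk, hineq⟩ := averaging K lam c d
    (fun k _ => gapOf_nonneg S k.2)
    (fun k _ => cutVal_nonneg C hCnonneg _)
    (fun k _ => cutVal_nonneg D hDnonneg _)
    hpos'
  refine ⟨k.1, k.2, hdk, ?_⟩
  rw [div_le_div_iff₀ hdk hpos]
  rw [hdecompC, hdecompD]
  exact hineq
end

section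
/- Upper bound on the seed-based ℓ1 distance: let x ∈ Lasserre_r(V) and let N ⊆ V with |N| + 2 ≤ r + 1. Then for every pair u, v ∈ V, Σ over all labelings f : N → {0,1} of |⟨x_N(f), x_u − x_v⟩| ≤ ‖x_u − x_v‖². (Equivalently, the seed-based embedding y_u := (⟨x_N(f), x_u⟩)_{f:N→{0,1}} satisfies ‖y_u − y_v‖₁ ≤ ‖x_u − x_v‖².) -/
open scoped RealInnerProductSpace

section Aux
open Finset

variable {V : Type*} [Fintype V] [DecidableEq V] {r d : ℕ}
  {x : Finset V → (V → Bool) → EuclideanSpace ℝ (Fin d)}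

lemma innerP (hx : IsLasserre V r d x) (S : Finset V) (hS : S.card ≤ r+1)
    (u : V) (hu : u ∈ S) (f : V → Bool) :
    ⟪x S f, x {u} (fun _ => true)⟫ = if f u = true then ‖x S f‖^2 else 0 := by
  have hc1 : ({u} : Finset V).card ≤ r + 1 := by simp
  by_cases h : f u = true
  · rw [if_pos h]
    have h1 : x {u} (fun _ => true) = x {u} f :=
      hx.localDep _ _ _ (by intro w hw; simp only [Finset.mem_singleton] at hw; subst hw; simp [h])
    have h2 : S ∪ {u} = S ∪ S := by
      rw [Finset.union_self, Finset.union_eq_left]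
      simpa using hu
    rw [h1, hx.consistent S {u} S S hS hc1 hS hS h2, real_inner_self_eq_norm_sq]
  · rw [if_neg h]
    exact hx.ortho S {u} hS hc1 f _ ⟨u, by simp [hu], by simpa using h⟩

lemma margSum (hx : IsLasserre V r d x) (S : Finset V) (hS : S.card ≤ r+1)
    (D : Finset V) (hD : D ⊆ S) (f : V → Bool) :
    x (S \ D) f = ∑ h : {a // a ∈ S} → Bool,
      if (∀ w ∈ S \ D, extendLab S h w = f w) then x S (extendLab S h) else 0 := by
  induction D using Finset.induction_on generalizing f with
  | empty =>
    rw [Finset.sdiff_empty]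
    have key : ∀ h : {a // a ∈ S} → Bool,
        (if (∀ w ∈ S, extendLab S h w = f w) then x S (extendLab S h) else 0)
        = if h = (fun a => f a.1) then x S f else 0 := by
      intro h
      by_cases hc : ∀ w ∈ S, extendLab S h w = f w
      · rw [if_pos hc, if_pos, hx.localDep _ _ _ hc]
        funext a
        have := hc a.1 a.2
        simpa [extendLab, a.2] using this
      · rw [if_neg hc, if_neg]
        intro he
        exact hc (by intro w hw; subst he; simp [extendLab, hw])
    rw [Finset.sum_congr rfl (fun h _ => key h)]
    simp
  | @insert a D haD ih =>
    have haS : a ∈ S := hD (Finset.mem_insert_self a D)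
    have hDS : D ⊆ S := fun w hw => hD (Finset.mem_insert_of_mem hw)
    have haSD : a ∈ S \ D := Finset.mem_sdiff.2 ⟨haS, haD⟩
    have h1 : S \ insert a D = (S \ D).erase a := by
      ext w; simp [Finset.mem_sdiff, Finset.mem_erase]; tauto
    rw [h1, ← hx.marginal (S \ D) (le_trans (Finset.card_le_card Finset.sdiff_subset) hS) a haSD f,
      ih hDS (Function.update f a false), ih hDS (Function.update f a true),
      ← Finset.sum_add_distrib]
    refine Finset.sum_congr rfl fun h _ => ?_
    by_cases hC : ∀ w ∈ (S \ D).erase a, extendLab S h w = f w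
    · rw [if_pos hC]
      cases hEa : extendLab S h a with
      | false =>
        rw [if_pos, if_neg]
        · simp
        · intro hc
          have := hc a haSD
          rw [hEa, Function.update_self] at this
          simp at this
        · intro w hw
          by_cases hwa : w = a
          · subst hwa; simp [hEa]
          · rw [Function.update_of_ne hwa]
            exact hC w (Finset.mem_erase.2 ⟨hwa, hw⟩)
      | true =>
        rw [if_neg, if_pos]
        · simp
        · intro w hw
          by_cases hwa : w = a
          · subst hwa; simp [hEa]
          · rw [Function.update_of_ne hwa]
            exact hC w (Finset.mem_erase.2 ⟨hwa, hw⟩)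
        · intro hc
          have := hc a haSD
          rw [hEa, Function.update_self] at this
          simp at this
    · rw [if_neg hC, if_neg, if_neg]
      · simp
      all_goals
        intro hc
        exact hC (by
          intro w hw
          have hwa : w ≠ a := (Finset.mem_erase.1 hw).1
          have := hc w (Finset.mem_of_mem_erase hw)
          rwa [Function.update_of_ne hwa] at this)

end Aux

/-- Upper bound on the seed-based `ℓ₁` distance: for a Lasserre solution
`x` and a seed set `N` with `|N| + 2 ≤ r + 1`,
`Σ_{f : N → {0,1}} |⟨x_N(f), x_u − x_v⟩| ≤ ‖x_u − x_v‖²` for every pair `u, v`. -/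
theorem stmt5 {V : Type*} [Fintype V] [DecidableEq V] (r d : ℕ)
    (x : Finset V → (V → Bool) → EuclideanSpace ℝ (Fin d))
    (hx : IsLasserre V r d x)
    (N : Finset V) (hN : N.card + 2 ≤ r + 1) (u v : V) :
    ∑ g : {a // a ∈ N} → Bool, |⟪x N (extendLab N g), xVec x u - xVec x v⟫|
      ≤ ‖xVec x u - xVec x v‖ ^ 2 := by

  classical
  set S : Finset V := N ∪ {u, v} with hSdef
  have hNS : N ⊆ S := Finset.subset_union_left
  have huS : u ∈ S := by simp [hSdef]
  have hvS : v ∈ S := by simp [hSdef]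
  have hS : S.card ≤ r + 1 := by
    refine le_trans (le_trans (Finset.card_union_le _ _) ?_) hN
    have : ({u, v} : Finset V).card ≤ 2 := Finset.card_insert_le _ _ |>.trans (by simp)
    omega
  set E : ({a // a ∈ S} → Bool) → V → Bool := fun h => extendLab S h with hE
  set p : ({a // a ∈ S} → Bool) → ℝ := fun h => ‖x S (E h)‖^2 with hp
  have hp0 : ∀ h, 0 ≤ p h := fun h => by positivity
  set c : ({a // a ∈ S} → Bool) → ℝ :=
    fun h => (if E h u then (1:ℝ) else 0) - (if E h v then 1 else 0) with hc
  have hXy : ∀ h, ⟪x S (E h), xVec x u - xVec x v⟫ = c h * p h := by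
    intro h
    rw [inner_sub_right]
    unfold xVec
    rw [innerP hx S hS u huS, innerP hx S hS v hvS]
    by_cases h1 : E h u = true <;> by_cases h2 : E h v = true <;>
      simp [hc, hp, h1, h2]
  have hNdec : ∀ g : {a // a ∈ N} → Bool, x N (extendLab N g)
      = ∑ h : {a // a ∈ S} → Bool,
        if (∀ w ∈ N, E h w = extendLab N g w) then x S (E h) else 0 := by
    intro g
    have := margSum hx S hS (S \ N) Finset.sdiff_subset (extendLab N g)
    rwa [sdiff_sdiff_eq_self hNS] at this
  have hudec : ∀ w : V, w ∈ S → xVec x w = ∑ h : {a // a ∈ S} → Bool,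
      if E h w = true then x S (E h) else 0 := by
    intro w hw
    have := margSum hx S hS (S \ {w}) Finset.sdiff_subset (fun _ => true)
    rw [sdiff_sdiff_eq_self (by simpa using hw : {w} ≤ S)] at this
    unfold xVec
    rw [this]
    exact Finset.sum_congr rfl fun h _ => if_congr (by simp; rfl) rfl rfl
  have key1 : ∀ g : {a // a ∈ N} → Bool,
      ⟪x N (extendLab N g), xVec x u - xVec x v⟫
      = ∑ h : {a // a ∈ S} → Bool,
        if (∀ w ∈ N, E h w = extendLab N g w) then c h * p h else 0 := by
    intro g
    rw [hNdec g, sum_inner]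
    refine Finset.sum_congr rfl fun h _ => ?_
    by_cases hA : ∀ w ∈ N, E h w = extendLab N g w
    · rw [if_pos hA, if_pos hA, hXy]
    · rw [if_neg hA, if_neg hA, inner_zero_left]
  have hgen : ∀ w : V, w ∈ S → ∀ y : EuclideanSpace ℝ (Fin d),
      ⟪xVec x w, y⟫ = ∑ h : {a // a ∈ S} → Bool,
        if E h w = true then ⟪x S (E h), y⟫ else 0 := by
    intro w hw y
    rw [hudec w hw, sum_inner]
    refine Finset.sum_congr rfl fun h _ => ?_
    by_cases h1 : E h w = true
    · rw [if_pos h1, if_pos h1]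
    · rw [if_neg h1, if_neg h1, inner_zero_left]
  have key2 : ⟪xVec x u - xVec x v, xVec x u - xVec x v⟫
      = ∑ h : {a // a ∈ S} → Bool, c h * (c h * p h) := by
    rw [inner_sub_left, hgen u huS, hgen v hvS, ← Finset.sum_sub_distrib]
    refine Finset.sum_congr rfl fun h _ => ?_
    rw [hXy h]
    by_cases h1 : E h u = true <;> by_cases h2 : E h v = true <;>
      simp [hc, h1, h2]
  calc ∑ g : {a // a ∈ N} → Bool, |⟪x N (extendLab N g), xVec x u - xVec x v⟫|
      = ∑ g : {a // a ∈ N} → Bool, |∑ h : {a // a ∈ S} → Bool,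
          if (∀ w ∈ N, E h w = extendLab N g w) then c h * p h else 0| := by
        exact Finset.sum_congr rfl fun g _ => by rw [key1 g]
    _ ≤ ∑ g : {a // a ∈ N} → Bool, ∑ h : {a // a ∈ S} → Bool,
          |if (∀ w ∈ N, E h w = extendLab N g w) then c h * p h else 0| :=
        Finset.sum_le_sum fun g _ => Finset.abs_sum_le_sum_abs _ _
    _ = ∑ h : {a // a ∈ S} → Bool, ∑ g : {a // a ∈ N} → Bool,
          if (∀ w ∈ N, E h w = extendLab N g w) then |c h| * p h else 0 := by
        rw [Finset.sum_comm]
        refine Finset.sum_congr rfl fun h _ => Finset.sum_congr rfl fun g _ => ?_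
        rw [apply_ite abs, abs_zero, abs_mul, abs_of_nonneg (hp0 h)]
    _ = ∑ h : {a // a ∈ S} → Bool, |c h| * p h := by
        refine Finset.sum_congr rfl fun h _ => ?_
        have hiff : ∀ g : {a // a ∈ N} → Bool,
            (∀ w ∈ N, E h w = extendLab N g w) ↔ g = (fun a => E h a.1) := by
          intro g
          constructor
          · intro hA
            funext a
            have := hA a.1 a.2
            simp only [extendLab, a.2, dif_pos] at this
            exact this.symm
          · rintro rfl w hw
            simp [extendLab, hw]
        rw [Finset.sum_congr rfl fun g _ => if_congr (hiff g) rfl rfl]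
        simp
    _ ≤ ∑ h : {a // a ∈ S} → Bool, c h * (c h * p h) := by
        refine Finset.sum_le_sum fun h _ => ?_
        have : |c h| = c h * c h := by
          by_cases h1 : E h u = true <;> by_cases h2 : E h v = true <;>
            simp [hc, h1, h2]
        rw [← mul_assoc, ← this]
    _ = ‖xVec x u - xVec x v‖ ^ 2 := by rw [← key2, real_inner_self_eq_norm_sq]
end

section
/- Lower bound on the seed-based ℓ1 distance: let x ∈ Lasserre_r(V) and let N ⊆ V with |N| ≤ r. Then for every pair u, v ∈ V, Σ over all labelings f : N → {0,1} of |⟨x_N(f), x_u − x_v⟩| ≥ Σ over labelings f with x_N(f) ≠ 0 of ⟨x_N(f), x_u − x_v⟩² / ‖x_N(f)‖², i.e., the ℓ1 distance of the seed-based embedding is at least Σ_{f : x_N(f) ≠ 0} ⟨x_N(f)/‖x_N(f)‖, x_u − x_v⟩². -/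
open scoped RealInnerProductSpace

/-- Key bound: `0 ≤ ⟪x_N(f), x_u⟫ ≤ ‖x_N(f)‖²`. -/
lemma key_bound {V : Type*} [Fintype V] [DecidableEq V] {r d : ℕ}
    {x : Finset V → (V → Bool) → EuclideanSpace ℝ (Fin d)}
    (hx : IsLasserre V r d x)
    (N : Finset V) (hN : N.card ≤ r) (u : V) (f : V → Bool) :
    0 ≤ ⟪x N f, xVec x u⟫ ∧ ⟪x N f, xVec x u⟫ ≤ ‖x N f‖ ^ 2 := by
  have hNc : N.card ≤ r + 1 := hN.trans (Nat.le_succ r)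
  have huc : ({u} : Finset V).card ≤ r + 1 := by simp
  by_cases hu : u ∈ N
  · by_cases hfu : f u = true
    · have h1 : x {u} f = xVec x u := by
        apply hx.localDep
        intro w hw
        simp only [Finset.mem_singleton] at hw
        subst hw; simpa using hfu
      have h2 : ⟪x N f, x {u} f⟫ = ⟪x N f, x N f⟫ := by
        apply hx.consistent N {u} N N hNc huc hNc hNc
        rw [Finset.union_eq_left.mpr (Finset.singleton_subset_iff.mpr hu), Finset.union_self]
      rw [← h1, h2, real_inner_self_eq_norm_sq]
      exact ⟨by positivity, le_rfl⟩
    · have h0 : ⟪x N f, x {u} (fun _ => true)⟫ = 0 := by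
        apply hx.ortho N {u} hNc huc
        refine ⟨u, ?_, ?_⟩
        · simp [hu]
        · simp [hfu]
      rw [show xVec x u = x {u} (fun _ => true) from rfl, h0]
      exact ⟨le_rfl, by positivity⟩
  · -- u ∉ N
    set S := insert u N with hS
    have hSc : S.card ≤ r + 1 := by
      rw [hS]
      have := Finset.card_insert_le u N
      omega
    set ht := Function.update f u true with hht
    set hf := Function.update f u false with hhf
    have hNt : x N ht = x N f := by
      apply hx.localDep
      intro w hw
      rw [hht, Function.update_of_ne (by rintro rfl; exact hu hw)]
    have hNf : x N hf = x N f := by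
      apply hx.localDep
      intro w hw
      rw [hhf, Function.update_of_ne (by rintro rfl; exact hu hw)]
    have hmarg : x S hf + x S ht = x N f := by
      have := hx.marginal S hSc u (Finset.mem_insert_self u N) f
      rwa [show S.erase u = N from by
        rw [hS, Finset.erase_insert hu]] at this
    have hunion : N ∪ {u} = S ∪ S := by
      rw [hS, Finset.union_self, Finset.union_comm]; exact (Finset.insert_eq u N).symm
    have hunion' : N ∪ S = S ∪ S := by
      rw [hS, Finset.union_self]; exact Finset.union_eq_right.mpr (Finset.subset_insert u N)
    have hb : ⟪x N f, xVec x u⟫ = ‖x S ht‖ ^ 2 := by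
      have hcons := hx.consistent N {u} S S hNc huc hSc hSc hunion ht
      rw [hNt, real_inner_self_eq_norm_sq] at hcons
      have hxu : x {u} ht = xVec x u := by
        apply hx.localDep
        intro w hw
        simp only [Finset.mem_singleton] at hw
        subst hw
        simp [hht]
      rwa [hxu] at hcons
    have ha : ⟪x N f, x S hf⟫ = ‖x S hf‖ ^ 2 := by
      have hcons := hx.consistent N S S S hNc hSc hSc hSc hunion' hf
      rw [hNf, real_inner_self_eq_norm_sq] at hcons
      exact hcons
    have hsum : ⟪x N f, x S hf⟫ + ⟪x N f, x S ht⟫ = ‖x N f‖ ^ 2 := by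
      rw [← inner_add_right, hmarg, real_inner_self_eq_norm_sq]
    have hbt : ⟪x N f, x S ht⟫ = ‖x S ht‖ ^ 2 := by
      have hcons := hx.consistent N S S S hNc hSc hSc hSc hunion' ht
      rw [hNt, real_inner_self_eq_norm_sq] at hcons
      exact hcons
    constructor
    · rw [hb]; positivity
    · rw [hb, ← hbt]
      nlinarith [ha, hsum, sq_nonneg ‖x S hf‖]

open scoped Classical in
/-- Lower bound on the seed-based `ℓ₁` distance: for a Lasserre solution
`x` and a seed set `N` with `|N| ≤ r`,
`Σ_{f : N → {0,1}} |⟨x_N(f), x_u − x_v⟩|` is at least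
`Σ_{f : x_N(f) ≠ 0} ⟨x_N(f), x_u − x_v⟩² / ‖x_N(f)‖²`. -/
theorem stmt6 {V : Type*} [Fintype V] [DecidableEq V] (r d : ℕ)
    (x : Finset V → (V → Bool) → EuclideanSpace ℝ (Fin d))
    (hx : IsLasserre V r d x)
    (N : Finset V) (hN : N.card ≤ r) (u v : V) :
    ∑ g ∈ Finset.univ.filter
        (fun g : {a // a ∈ N} → Bool => x N (extendLab N g) ≠ 0),
      ⟪x N (extendLab N g), xVec x u - xVec x v⟫ ^ 2 / ‖x N (extendLab N g)‖ ^ 2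
      ≤ ∑ g : {a // a ∈ N} → Bool,
          |⟪x N (extendLab N g), xVec x u - xVec x v⟫| := by
  have key : ∀ g : {a // a ∈ N} → Bool,
      |⟪x N (extendLab N g), xVec x u - xVec x v⟫| ≤ ‖x N (extendLab N g)‖ ^ 2 := by
    intro g
    have hu := key_bound hx N hN u (extendLab N g)
    have hv := key_bound hx N hN v (extendLab N g)
    rw [inner_sub_right]
    rw [abs_le]
    constructor <;> linarith [hu.1, hu.2, hv.1, hv.2]
  calc ∑ g ∈ Finset.univ.filter
        (fun g : {a // a ∈ N} → Bool => x N (extendLab N g) ≠ 0),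
      ⟪x N (extendLab N g), xVec x u - xVec x v⟫ ^ 2 / ‖x N (extendLab N g)‖ ^ 2
      ≤ ∑ g ∈ Finset.univ.filter
        (fun g : {a // a ∈ N} → Bool => x N (extendLab N g) ≠ 0),
          |⟪x N (extendLab N g), xVec x u - xVec x v⟫| := by
        apply Finset.sum_le_sum
        intro g hg
        rw [Finset.mem_filter] at hg
        have hne : ‖x N (extendLab N g)‖ ≠ 0 := norm_ne_zero_iff.mpr hg.2
        have hpos : (0:ℝ) < ‖x N (extendLab N g)‖ ^ 2 := by positivity
        rw [div_le_iff₀ hpos]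
        calc ⟪x N (extendLab N g), xVec x u - xVec x v⟫ ^ 2
            = |⟪x N (extendLab N g), xVec x u - xVec x v⟫| *
              |⟪x N (extendLab N g), xVec x u - xVec x v⟫| := by
              rw [← abs_mul, abs_mul_self, sq]
          _ ≤ |⟪x N (extendLab N g), xVec x u - xVec x v⟫| *
              ‖x N (extendLab N g)‖ ^ 2 := by
              apply mul_le_mul_of_nonneg_left (key g) (abs_nonneg _)
    _ ≤ ∑ g : {a // a ∈ N} → Bool,
          |⟪x N (extendLab N g), xVec x u - xVec x v⟫| := by
        apply Finset.sum_le_sum_of_subset_of_nonneg (Finset.filter_subset _ _)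
        intro g _ _
        exact abs_nonneg _
end

section
/- Let x ∈ Lasserre_r(V), let N ⊆ V with |N| ≤ r, and let E ⊆ {{a,b} : a,b ∈ N, a ≠ b} be a set of seed edges with endpoints in N. Let P denote the orthogonal projection of ℝ^Υ onto span{x_a − x_b : {a,b} ∈ E}, and P^⊥ = I − P. Then for every pair u, v ∈ V, Σ over all labelings f : N → {0,1} of |⟨x_N(f), x_u − x_v⟩| ≥ ‖P(x_u − x_v)‖² = ‖x_u − x_v‖² − ‖P^⊥(x_u − x_v)‖². -/
open scoped RealInnerProductSpace

section Aux

variable {V : Type*} [Fintype V] [DecidableEq V] {r d : ℕ}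
  {x : Finset V → (V → Bool) → EuclideanSpace ℝ (Fin d)}

lemma inner_bounds (hx : IsLasserre V r d x) {N : Finset V} (hN : N.card ≤ r)
    (a : V) (f : V → Bool) :
    0 ≤ ⟪x N f, xVec x a⟫ ∧ ⟪x N f, xVec x a⟫ ≤ ‖x N f‖ ^ 2 := by
  have hN1 : N.card ≤ r + 1 := hN.trans (Nat.le_succ r)
  have hone : ({a} : Finset V).card ≤ r + 1 := by simp
  by_cases ha : a ∈ N
  · by_cases hfa : f a = true
    · have h1 : xVec x a = x {a} f := by
        apply hx.localDep
        intro b hb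
        rw [Finset.mem_singleton] at hb
        subst hb
        exact hfa.symm
      have h2 : ⟪x N f, x {a} f⟫ = ⟪x N f, x N f⟫ := by
        apply hx.consistent N {a} N N hN1 hone hN1 hN1
        rw [Finset.union_self, Finset.union_eq_left]
        simpa using ha
      have hval : ⟪x N f, xVec x a⟫ = ‖x N f‖ ^ 2 := by
        rw [h1, h2, real_inner_self_eq_norm_sq]
      rw [hval]
      exact ⟨sq_nonneg _, le_refl _⟩
    · have h0 : ⟪x N f, x {a} (fun _ => true)⟫ = 0 :=
        hx.ortho N {a} hN1 hone f (fun _ => true)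
          ⟨a, by simp [ha], by simpa using hfa⟩
      have hval : ⟪x N f, xVec x a⟫ = 0 := h0
      rw [hval]
      exact ⟨le_refl _, sq_nonneg _⟩
  · set S := insert a N with hS
    have hcard : S.card ≤ r + 1 := by
      rw [hS, Finset.card_insert_of_notMem ha]; omega
    set f0 := Function.update f a false with hf0
    set f1 := Function.update f a true with hf1
    have hm : x S f0 + x S f1 = x N f := by
      have := hx.marginal S hcard a (Finset.mem_insert_self a N) f
      rwa [Finset.erase_insert ha] at this
    have haS : a ∈ S := Finset.mem_insert_self a N
    have h01 : ⟪x S f0, x S f1⟫ = 0 :=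
      hx.ortho S S hcard hcard f0 f1
        ⟨a, by simp [haS], by simp [hf0, hf1]⟩
    have hxa : xVec x a = x {a} f1 := by
      apply hx.localDep
      intro b hb
      rw [Finset.mem_singleton] at hb
      subst hb
      simp [hf1]
    have h0 : ⟪x S f0, x {a} f1⟫ = 0 :=
      hx.ortho S {a} hcard hone f0 f1 ⟨a, by simp [haS], by simp [hf0, hf1]⟩
    have h1 : ⟪x S f1, x {a} f1⟫ = ⟪x S f1, x S f1⟫ := by
      apply hx.consistent S {a} S S hcard hone hcard hcard
      rw [Finset.union_self, Finset.union_eq_left]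
      simpa using haS
    have hval : ⟪x N f, xVec x a⟫ = ‖x S f1‖ ^ 2 := by
      rw [hxa, ← hm, inner_add_left, h0, h1, real_inner_self_eq_norm_sq]
      ring
    have hnorm : ‖x N f‖ ^ 2 = ‖x S f0‖ ^ 2 + ‖x S f1‖ ^ 2 := by
      rw [← hm, ← real_inner_self_eq_norm_sq, real_inner_add_add_self, h01,
        real_inner_self_eq_norm_sq, real_inner_self_eq_norm_sq]
      ring
    constructor
    · rw [hval]; exact sq_nonneg _
    · rw [hval, hnorm]; nlinarith [sq_nonneg ‖x S f0‖]

lemma mem_span_labelings (hx : IsLasserre V r d x) {N : Finset V} (hN : N.card ≤ r) :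
    ∀ (n : ℕ) (S : Finset V), (N \ S).card ≤ n → S ⊆ N → ∀ h : V → Bool,
      x S h ∈ Submodule.span ℝ
        (Set.range fun g : {a // a ∈ N} → Bool => x N (extendLab N g)) := by
  intro n
  induction n with
  | zero =>
    intro S hcard hS h
    have hNS : S = N := by
      apply Finset.Subset.antisymm hS
      intro a haN
      by_contra haS
      have hmem : a ∈ N \ S := Finset.mem_sdiff.mpr ⟨haN, haS⟩
      have := Finset.card_pos.mpr ⟨a, hmem⟩
      omega
    subst hNS
    have heq : x S h = x S (extendLab S fun a => h a.1) := by
      apply hx.localDep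
      intro b hb
      simp [extendLab, hb]
    rw [heq]
    exact Submodule.subset_span ⟨fun a => h a.1, rfl⟩
  | succ n ih =>
    intro S hcard hS h
    by_cases hNS : N ⊆ S
    · exact ih S (by simp [Finset.sdiff_eq_empty_iff_subset.mpr hNS]) hS h
    · have hne : (N \ S).Nonempty := by
        rw [Finset.sdiff_nonempty]; exact hNS
      obtain ⟨a, ha⟩ := hne
      rw [Finset.mem_sdiff] at ha
      have haS : a ∉ S := ha.2
      have hsub : insert a S ⊆ N := Finset.insert_subset ha.1 hS
      have hcard' : (N \ insert a S).card ≤ n := by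
        have he : N \ insert a S = (N \ S).erase a := by
          ext b
          simp only [Finset.mem_sdiff, Finset.mem_insert, Finset.mem_erase]
          tauto
        rw [he, Finset.card_erase_of_mem (Finset.mem_sdiff.mpr ha)]
        omega
      have hScard : (insert a S).card ≤ r + 1 :=
        (Finset.card_le_card hsub).trans (hN.trans (Nat.le_succ r))
      have hm := hx.marginal (insert a S) hScard a (Finset.mem_insert_self a S) h
      rw [Finset.erase_insert haS] at hm
      rw [← hm]
      exact Submodule.add_mem _ (ih _ hcard' hsub _) (ih _ hcard' hsub _)

end Aux

/-- Let `x` be a Lasserre solution, `N ⊆ V` with `|N| ≤ r`, and `E` a set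
of seed edges (pairs of distinct vertices) with endpoints in `N`.  Let `P` be the orthogonal
projection onto `span{x_a − x_b : {a,b} ∈ E}`.  Then for all `u, v`:
`Σ_{f : N → {0,1}} |⟨x_N(f), x_u − x_v⟩| ≥ ‖P(x_u − x_v)‖²`, and
`‖P(x_u − x_v)‖² = ‖x_u − x_v‖² − ‖P^⊥(x_u − x_v)‖²`. -/
theorem stmt8 {V : Type*} [Fintype V] [DecidableEq V] (r d : ℕ)
    (x : Finset V → (V → Bool) → EuclideanSpace ℝ (Fin d))
    (hx : IsLasserre V r d x)
    (N : Finset V) (hN : N.card ≤ r)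
    (E : Finset (V × V)) (hE : ∀ p ∈ E, p.1 ∈ N ∧ p.2 ∈ N ∧ p.1 ≠ p.2) (u v : V) :
    (‖(Submodule.orthogonalProjectionOnto
          (Submodule.span ℝ ((fun p : V × V => xVec x p.1 - xVec x p.2) '' ↑E))
          (xVec x u - xVec x v) : EuclideanSpace ℝ (Fin d))‖ ^ 2
        ≤ ∑ g : {a // a ∈ N} → Bool,
            |⟪x N (extendLab N g), xVec x u - xVec x v⟫|) ∧
    ‖(Submodule.orthogonalProjectionOnto
        (Submodule.span ℝ ((fun p : V × V => xVec x p.1 - xVec x p.2) '' ↑E))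
        (xVec x u - xVec x v) : EuclideanSpace ℝ (Fin d))‖ ^ 2
      = ‖xVec x u - xVec x v‖ ^ 2 -
        ‖(xVec x u - xVec x v) -
          (Submodule.orthogonalProjectionOnto
            (Submodule.span ℝ ((fun p : V × V => xVec x p.1 - xVec x p.2) '' ↑E))
            (xVec x u - xVec x v) : EuclideanSpace ℝ (Fin d))‖ ^ 2 := by
  classical
  set K : Submodule ℝ (EuclideanSpace ℝ (Fin d)) :=
    Submodule.span ℝ ((fun p : V × V => xVec x p.1 - xVec x p.2) '' ↑E) with hK
  set w : EuclideanSpace ℝ (Fin d) := xVec x u - xVec x v with hw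
  set P : EuclideanSpace ℝ (Fin d) :=
    (Submodule.orthogonalProjectionOnto K w : EuclideanSpace ℝ (Fin d)) with hP
  set U : Submodule ℝ (EuclideanSpace ℝ (Fin d)) :=
    Submodule.span ℝ (Set.range fun g : {a // a ∈ N} → Bool => x N (extendLab N g)) with hU
  have hPK : P ∈ K := (Submodule.orthogonalProjectionOnto K w).2
  have hwP : w - P ∈ Kᗮ := Submodule.sub_starProjection_mem_orthogonal (K := K) w
  have hinner_wP : ⟪P, w - P⟫ = 0 := (Submodule.mem_orthogonal K (w - P)).1 hwP P hPK
  -- Pythagoras (second claim)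
  have pyth : ‖P‖ ^ 2 = ‖w‖ ^ 2 - ‖w - P‖ ^ 2 := by
    have heq : P + (w - P) = w := by abel
    have h2 : ‖w‖ ^ 2 = ‖P + (w - P)‖ ^ 2 := by rw [heq]
    rw [norm_add_sq_real, hinner_wP] at h2
    linarith
  -- abbreviations
  have habs : ∀ g : {a // a ∈ N} → Bool,
      |⟪x N (extendLab N g), w⟫| ≤ ‖x N (extendLab N g)‖ ^ 2 := by
    intro g
    obtain ⟨h1u, h2u⟩ := inner_bounds hx hN u (extendLab N g)
    obtain ⟨h1v, h2v⟩ := inner_bounds hx hN v (extendLab N g)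
    have hceq : ⟪x N (extendLab N g), w⟫
        = ⟪x N (extendLab N g), xVec x u⟫ - ⟪x N (extendLab N g), xVec x v⟫ := by
      rw [hw, inner_sub_right]
    rw [hceq]
    exact abs_le.mpr ⟨by linarith, by linarith⟩
  set q : EuclideanSpace ℝ (Fin d) :=
    ∑ g : {a // a ∈ N} → Bool,
      (if ‖x N (extendLab N g)‖ ^ 2 = 0 then (0 : ℝ)
       else ⟪x N (extendLab N g), w⟫ / ‖x N (extendLab N g)‖ ^ 2) • x N (extendLab N g)
    with hq
  have hqU : q ∈ U := by
    rw [hq]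
    exact Submodule.sum_mem _ fun g _ =>
      Submodule.smul_mem _ _ (Submodule.subset_span ⟨g, rfl⟩)
  have horthF : ∀ g g' : {a // a ∈ N} → Bool, g ≠ g' →
      ⟪x N (extendLab N g), x N (extendLab N g')⟫ = 0 := by
    intro g g' hgg
    obtain ⟨a, hag⟩ := Function.ne_iff.mp hgg
    apply hx.ortho N N (hN.trans (Nat.le_succ r)) (hN.trans (Nat.le_succ r))
    refine ⟨a.1, Finset.mem_inter.mpr ⟨a.2, a.2⟩, ?_⟩
    simp only [extendLab, dif_pos a.2]
    simpa using hag
  have hinner_q : ∀ g' : {a // a ∈ N} → Bool,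
      ⟪x N (extendLab N g'), q⟫ = ⟪x N (extendLab N g'), w⟫ := by
    intro g'
    rw [hq, inner_sum]
    rw [Finset.sum_eq_single g']
    · rw [real_inner_smul_right]
      by_cases h0 : ‖x N (extendLab N g')‖ ^ 2 = 0
      · have hx0 : x N (extendLab N g') = 0 := by
          have := pow_eq_zero_iff (n := 2) (by norm_num) |>.mp h0
          exact norm_eq_zero.mp this
        simp [hx0]
      · rw [if_neg h0, real_inner_self_eq_norm_sq]
        exact div_mul_cancel₀ _ h0
    · intro g _ hgg
      rw [real_inner_smul_right, horthF g' g (Ne.symm hgg), mul_zero]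
    · intro hmem
      exact absurd (Finset.mem_univ g') hmem
  have hwqU : w - q ∈ Uᗮ := by
    rw [Submodule.mem_orthogonal]
    intro p hp
    rw [hU] at hp
    induction hp using Submodule.span_induction with
    | mem p hp =>
      obtain ⟨g', rfl⟩ := hp
      rw [inner_sub_right, hinner_q g', sub_self]
    | zero => simp
    | add a b ha hb iha ihb => rw [inner_add_left, iha, ihb, add_zero]
    | smul t a ha iha => rw [real_inner_smul_left, iha, mul_zero]
  have hKU : K ≤ U := by
    rw [hK, hU, Submodule.span_le]
    rintro y ⟨p, hpE, rfl⟩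
    obtain ⟨h1, h2, -⟩ := hE p (Finset.mem_coe.mp hpE)
    have m1 : xVec x p.1 ∈ Submodule.span ℝ
        (Set.range fun g : {a // a ∈ N} → Bool => x N (extendLab N g)) :=
      mem_span_labelings hx hN (N \ {p.1}).card {p.1} le_rfl
        (Finset.singleton_subset_iff.mpr h1) _
    have m2 : xVec x p.2 ∈ Submodule.span ℝ
        (Set.range fun g : {a // a ∈ N} → Bool => x N (extendLab N g)) :=
      mem_span_labelings hx hN (N \ {p.2}).card {p.2} le_rfl
        (Finset.singleton_subset_iff.mpr h2) _
    exact Submodule.sub_mem _ m1 m2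
  have hPU : P ∈ U := hKU hPK
  have hPw : ⟪P, w⟫ = ‖P‖ ^ 2 := by
    have h1 := hinner_wP
    rw [inner_sub_right, real_inner_self_eq_norm_sq] at h1
    linarith
  have hPq : ⟪P, w - q⟫ = 0 := (Submodule.mem_orthogonal U (w - q)).1 hwqU P hPU
  have hqwq : ⟪q, w - q⟫ = 0 := (Submodule.mem_orthogonal U (w - q)).1 hwqU q hqU
  have hqw : ⟪q, w⟫ = ‖q‖ ^ 2 := by
    rw [inner_sub_right, real_inner_self_eq_norm_sq] at hqwq
    linarith
  have hPlq : ‖P‖ ^ 2 ≤ ‖q‖ ^ 2 := by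
    have h2 : ⟪P, q⟫ = ‖P‖ ^ 2 := by
      rw [inner_sub_right] at hPq
      linarith [hPw]
    have h3 : ⟪P, q⟫ ≤ ‖P‖ * ‖q‖ := real_inner_le_norm P q
    nlinarith [norm_nonneg P, norm_nonneg q, sq_nonneg (‖P‖ - ‖q‖)]
  have hqval : ‖q‖ ^ 2 = ∑ g : {a // a ∈ N} → Bool,
      (if ‖x N (extendLab N g)‖ ^ 2 = 0 then (0 : ℝ)
       else ⟪x N (extendLab N g), w⟫ / ‖x N (extendLab N g)‖ ^ 2)
        * ⟪x N (extendLab N g), w⟫ := by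
    rw [← hqw, hq, sum_inner]
    apply Finset.sum_congr rfl
    intro g _
    rw [real_inner_smul_left]
  have hterm : ∀ g : {a // a ∈ N} → Bool,
      (if ‖x N (extendLab N g)‖ ^ 2 = 0 then (0 : ℝ)
       else ⟪x N (extendLab N g), w⟫ / ‖x N (extendLab N g)‖ ^ 2)
        * ⟪x N (extendLab N g), w⟫ ≤ |⟪x N (extendLab N g), w⟫| := by
    intro g
    by_cases h0 : ‖x N (extendLab N g)‖ ^ 2 = 0
    · rw [if_pos h0, zero_mul]
      exact abs_nonneg _
    · rw [if_neg h0, div_mul_eq_mul_div]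
      have hnpos : 0 < ‖x N (extendLab N g)‖ ^ 2 :=
        lt_of_le_of_ne (sq_nonneg _) (Ne.symm h0)
      rw [div_le_iff₀ hnpos]
      have := habs g
      nlinarith [abs_nonneg ⟪x N (extendLab N g), w⟫,
        sq_abs ⟪x N (extendLab N g), w⟫]
    
  constructor
  · calc ‖P‖ ^ 2 ≤ ‖q‖ ^ 2 := hPlq
      _ = _ := hqval
      _ ≤ ∑ g : {a // a ∈ N} → Bool, |⟪x N (extendLab N g), w⟫| :=
        Finset.sum_le_sum fun g _ => hterm g
  · exact pyth
end

section
/- Let X, Y ∈ ℝ^{n×n} be symmetric matrices with Y positive semidefinite. Then tr(XY) ≥ Σ_{j=1}^{n} σ_j(X)·λ_j(Y), where σ_1(X) ≥ σ_2(X) ≥ ... ≥ σ_n(X) are the eigenvalues of X in descending order and λ_1(Y) ≤ λ_2(Y) ≤ ... ≤ λ_n(Y) are the eigenvalues of Y in ascending order. -/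
open Matrix Finset

/-- For real symmetric `n×n` matrices `X`, `Y` with `Y` positive
semidefinite, `tr(XY) ≥ Σ_j σ_j(X)·λ_j(Y)`, where `σ_1(X) ≥ … ≥ σ_n(X)` are the
eigenvalues of `X` in descending order and `λ_1(Y) ≤ … ≤ λ_n(Y)` are the eigenvalues of
`Y` in ascending order. -/
theorem stmt13 {n : ℕ} (X Y : Matrix (Fin n) (Fin n) ℝ)
    (hX : X.IsHermitian) (hY : Y.PosSemidef)
    (σ lam : Fin n → ℝ) (hσa : Antitone σ) (hlm : Monotone lam)
    (hσ : ∃ e : Equiv.Perm (Fin n), ∀ i, σ i = hX.eigenvalues (e i))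
    (hl : ∃ e : Equiv.Perm (Fin n), ∀ i, lam i = hY.isHermitian.eigenvalues (e i)) :
    ∑ j, σ j * lam j ≤ (X * Y).trace := by
  classical
  obtain ⟨p, hp⟩ := hσ
  obtain ⟨q, hq⟩ := hl
  set μ : Fin n → ℝ := hX.eigenvalues with hμ
  set ν : Fin n → ℝ := hY.isHermitian.eigenvalues with hν
  -- rearrangement bound for each permutation
  have hav : Antivary σ lam := by
    intro i j h
    refine hσa (le_of_not_gt fun h' => ?_)
    exact absurd (hlm h'.le) (not_le_of_gt h)
  have key : ∀ e : Equiv.Perm (Fin n), ∑ j, σ j * lam j ≤ ∑ i, μ i * ν (e i) := by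
    intro e
    have h1 : ∑ i, μ i * ν (e i) = ∑ k, σ k * lam ((p.trans (e.trans q.symm)) k) := by
      rw [← Equiv.sum_comp p (fun i => μ i * ν (e i))]
      refine Finset.sum_congr rfl fun k _ => ?_
      rw [hp k, hq ((p.trans (e.trans q.symm)) k)]
      simp
    rw [h1]
    have := hav.sum_smul_le_sum_smul_comp_perm (σ := p.trans (e.trans q.symm))
    simpa [smul_eq_mul] using this
  -- spectral decompositions
  set U : Matrix (Fin n) (Fin n) ℝ := (hX.eigenvectorUnitary : Matrix (Fin n) (Fin n) ℝ) with hUdef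
  set V : Matrix (Fin n) (Fin n) ℝ := (hY.isHermitian.eigenvectorUnitary : Matrix (Fin n) (Fin n) ℝ) with hVdef
  have hU1 : star U * U = 1 := mem_unitaryGroup_iff'.mp hX.eigenvectorUnitary.2
  have hU2 : U * star U = 1 := mem_unitaryGroup_iff.mp hX.eigenvectorUnitary.2
  have hV1 : star V * V = 1 := mem_unitaryGroup_iff'.mp hY.isHermitian.eigenvectorUnitary.2
  have hV2 : V * star V = 1 := mem_unitaryGroup_iff.mp hY.isHermitian.eigenvectorUnitary.2
  set W : Matrix (Fin n) (Fin n) ℝ := star U * V with hWdef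
  have hsW : star W = star V * U := by rw [hWdef, Matrix.star_mul, star_star]
  have hWW : W * star W = 1 := by
    rw [hWdef, hsW, Matrix.mul_assoc, ← Matrix.mul_assoc V, hV2, Matrix.one_mul, hU1]
  have hWW' : star W * W = 1 := by
    rw [hWdef, hsW, Matrix.mul_assoc, ← Matrix.mul_assoc U, hU2, Matrix.one_mul, hV1]
  have hXs : X = U * diagonal μ * star U := by
    have := hX.spectral_theorem
    simpa using this
  have hYs : Y = V * diagonal ν * star V := by
    have := hY.isHermitian.spectral_theorem
    simpa using this
  have hXY : X * Y = U * (diagonal μ * W * diagonal ν * star W) * star U := by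
    rw [hXs, hYs, hWdef, hsW]
    simp only [Matrix.mul_assoc]
    rw [hU2]
    simp only [Matrix.mul_one]
  have htr : (X * Y).trace = ∑ i, ∑ j, μ i * ν j * (W i j) ^ 2 := by
    rw [hXY, Matrix.trace_mul_cycle, ← Matrix.mul_assoc, hU1, Matrix.one_mul]
    rw [Matrix.trace]
    simp only [Matrix.diag_apply, Matrix.mul_apply, Matrix.diagonal_apply, Matrix.star_apply,
      star_trivial, ite_mul, zero_mul, mul_ite, mul_zero, Finset.sum_ite_eq,
      Finset.sum_ite_eq', Finset.mem_univ, if_true]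
    refine Finset.sum_congr rfl fun i _ => Finset.sum_congr rfl fun j _ => by ring
  -- doubly stochastic matrix
  set M : Matrix (Fin n) (Fin n) ℝ := Matrix.of fun i j => (W i j) ^ 2 with hMdef
  have hMmem : M ∈ doublyStochastic ℝ (Fin n) := by
    rw [mem_doublyStochastic_iff_sum]
    refine ⟨fun i j => sq_nonneg _, fun i => ?_, fun j => ?_⟩
    · have := congrArg (fun A => A i i) hWW
      simpa [Matrix.mul_apply, Matrix.one_apply, sq, hMdef] using this
    · have := congrArg (fun A => A j j) hWW'
      simpa [Matrix.mul_apply, Matrix.one_apply, sq, mul_comm, hMdef] using this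
  obtain ⟨w, hw0, hw1, hweq⟩ := exists_eq_sum_perm_of_mem_doublyStochastic hMmem
  have expand : ∀ i j, M i j = ∑ e : Equiv.Perm (Fin n), w e * (e.permMatrix ℝ) i j := by
    intro i j
    rw [← hweq, Matrix.sum_apply]
    refine Finset.sum_congr rfl fun e _ => ?_
    simp [Matrix.smul_apply, smul_eq_mul]
  have hperm : ∀ (e : Equiv.Perm (Fin n)) (i j : Fin n),
      (e.permMatrix ℝ) i j = if e i = j then 1 else 0 := by
    intro e i j
    simp [Equiv.Perm.permMatrix, PEquiv.toMatrix_apply, Equiv.toPEquiv_apply, Option.mem_def]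
  have hsum : ∑ i, ∑ j, μ i * ν j * (W i j) ^ 2
      = ∑ e : Equiv.Perm (Fin n), w e * ∑ i, μ i * ν (e i) := by
    have : ∀ i j, μ i * ν j * (W i j) ^ 2
        = ∑ e : Equiv.Perm (Fin n), w e * (μ i * ν j * (e.permMatrix ℝ) i j) := by
      intro i j
      rw [show (W i j) ^ 2 = M i j from rfl, expand i j, Finset.mul_sum]
      refine Finset.sum_congr rfl fun e _ => by ring
    simp_rw [this]
    rw [Finset.sum_congr rfl fun i (_ : i ∈ Finset.univ) =>
      (Finset.sum_comm (s := Finset.univ) (t := Finset.univ)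
        (f := fun j e => w e * (μ i * ν j * (e.permMatrix ℝ) i j)))]
    rw [Finset.sum_comm]
    refine Finset.sum_congr rfl fun e _ => ?_
    rw [Finset.mul_sum]
    refine Finset.sum_congr rfl fun i _ => ?_
    simp [Equiv.toPEquiv_apply, Finset.sum_ite_eq, hperm, mul_ite, mul_one, mul_zero]
  rw [htr, hsum]
  have hc : ∑ j, σ j * lam j = ∑ e : Equiv.Perm (Fin n), w e * ∑ j, σ j * lam j := by
    rw [← Finset.sum_mul, hw1, one_mul]
  rw [hc]
  exact Finset.sum_le_sum fun e _ => mul_le_mul_of_nonneg_left (key e) (hw0 e)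
end
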